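/- arXiv:2401.11299 — 3 statements merged into one kernel-verified Lean document; each statement's English description precedes it below -/
import Mathlib

section
/- For every M ∈ ⋀X, osp(M) is the smallest subspace of X whose exterior algebra contains M: M lies in the subalgebra ⋀(osp(M)) of ⋀X generated by osp(M), and if V ⊆ X is any subspace with M ∈ ⋀V, then osp(M) ⊆ V. -/
/-!
Setup: `X` is a finite-dimensional real inner product space, `⋀X` its exterior
algebra.  We hypothesize a bilinear form `innE` on the exterior algebra which makes
the wedges of any orthonormal basis of `X` (over increasing index sets) orthonormal
— this characterizes the inner product of the paper — and a bilinear left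
contraction `lcontr` adjoint to the wedge product: `⟨M⌟N, L⟩ = ⟨N, M∧L⟩`.
-/

noncomputable section

open ExteriorAlgebra

/-- The wedge product `v_{i₁} ∧ ⋯ ∧ v_{i_p}` of the vectors `v i`, `i ∈ s`,
taken in increasing order of the indices. -/
def wedgeOf {X : Type*} [AddCommGroup X] [Module ℝ X] {n : ℕ}
    (v : Fin n → X) (s : Finset (Fin n)) : ExteriorAlgebra ℝ X :=
  ((s.sort (· ≤ ·)).map fun i => ι ℝ (v i)).prod

/-- The inner space `isp M = {v : v ∧ M = 0}`. -/
def isp {X : Type*} [AddCommGroup X] [Module ℝ X]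
    (M : ExteriorAlgebra ℝ X) : Submodule ℝ X where
  carrier := {x | ι ℝ x * M = 0}
  add_mem' := by
    intro a b ha hb
    simp only [Set.mem_setOf_eq, map_add, add_mul] at *
    rw [ha, hb, add_zero]
  zero_mem' := by simp
  smul_mem' := by
    intro c x hx
    simp only [Set.mem_setOf_eq, map_smul, smul_mul_assoc] at *
    rw [hx, smul_zero]

/-- The space `{v : v ⌟ M = 0}`, whose orthogonal complement is the outer space. -/
def ospKer {X : Type*} [NormedAddCommGroup X] [InnerProductSpace ℝ X]
    (lcontr : ExteriorAlgebra ℝ X →ₗ[ℝ] ExteriorAlgebra ℝ X →ₗ[ℝ] ExteriorAlgebra ℝ X)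
    (M : ExteriorAlgebra ℝ X) : Submodule ℝ X where
  carrier := {x | lcontr (ι ℝ x) M = 0}
  add_mem' := by
    intro a b ha hb
    simp only [Set.mem_setOf_eq, map_add, LinearMap.add_apply] at *
    rw [ha, hb, add_zero]
  zero_mem' := by simp
  smul_mem' := by
    intro c x hx
    simp only [Set.mem_setOf_eq, map_smul, LinearMap.smul_apply] at *
    rw [hx, smul_zero]

/-- The outer space `osp M = {v : v ⌟ M = 0}ᗮ`. -/
def osp {X : Type*} [NormedAddCommGroup X] [InnerProductSpace ℝ X]
    (lcontr : ExteriorAlgebra ℝ X →ₗ[ℝ] ExteriorAlgebra ℝ X →ₗ[ℝ] ExteriorAlgebra ℝ X)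
    (M : ExteriorAlgebra ℝ X) : Submodule ℝ X :=
  (ospKer lcontr M)ᗮ

/-- `innE` is the inner product of `⋀X`: for every orthonormal basis of `X`, the
wedges of basis vectors over increasing index sets form an orthonormal family. -/
def InnerOK {X : Type*} [NormedAddCommGroup X] [InnerProductSpace ℝ X]
    (innE : ExteriorAlgebra ℝ X →ₗ[ℝ] ExteriorAlgebra ℝ X →ₗ[ℝ] ℝ) : Prop :=
  ∀ (m : ℕ) (w : OrthonormalBasis (Fin m) ℝ X) (s t : Finset (Fin m)),
    innE (wedgeOf (⇑w) s) (wedgeOf (⇑w) t) = if s = t then 1 else 0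

/-- `lcontr` is the left contraction: `⟨M ⌟ N, L⟩ = ⟨N, M ∧ L⟩`. -/
def ContrOK {X : Type*} [NormedAddCommGroup X] [InnerProductSpace ℝ X]
    (innE : ExteriorAlgebra ℝ X →ₗ[ℝ] ExteriorAlgebra ℝ X →ₗ[ℝ] ℝ)
    (lcontr : ExteriorAlgebra ℝ X →ₗ[ℝ] ExteriorAlgebra ℝ X →ₗ[ℝ] ExteriorAlgebra ℝ X) :
    Prop :=
  ∀ M N L : ExteriorAlgebra ℝ X, innE (lcontr M N) L = innE N (M * L)


/-- The subalgebra `⋀V` of `⋀X` generated by a subspace `V` of `X`. -/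
def extSub {X : Type*} [AddCommGroup X] [Module ℝ X] (V : Submodule ℝ X) :
    Subalgebra ℝ (ExteriorAlgebra ℝ X) :=
  Algebra.adjoin ℝ ((ι ℝ : X →ₗ[ℝ] ExteriorAlgebra ℝ X) '' (V : Set X))

/-!
Fix an orthonormal basis `b` of `X` adapted to a subspace `U`, i.e. each `b i` lies in `U` or
in `Uᗮ`. The wedges `b_s` form an orthonormal basis of `⋀X`, so the coefficient of `M` on `b_s`
is `⟨M, b_s⟩`, and for `j ∈ s` we have `b_s = ± b_j ∧ b_{s \ j}`, whence
`⟨M, b_s⟩ = ± ⟨b_j ⌟ M, b_{s \ j}⟩`.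

For `U = osp M`, every `b_j ∉ U` satisfies `b_j ⌟ M = 0`, so `M` is a combination of wedges of
basis vectors of `osp M`. Conversely, if `M ∈ ⋀V` and `U = V`, then `M` is a combination of
wedges `b_s` with `s` inside the `V`-part of the basis; for `v ⊥ V` the product `v ∧ b_t`
involves only wedges leaving that part, so `⟨v ⌟ M, b_t⟩ = ⟨M, v ∧ b_t⟩ = 0` for all `t`. Hence
`Vᗮ ⊆ {v : v ⌟ M = 0}`, i.e. `osp M ⊆ V`.
-/

theorem Algebra.mul_mem_of_mem_adjoin {R A : Type*} [CommSemiring R] [Semiring A] [Algebra R A]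
    {s : Set A} {p : Submodule R A} (hs : ∀ a ∈ s, ∀ q ∈ p, a * q ∈ p) {a : A}
    (ha : a ∈ Algebra.adjoin R s) : ∀ q ∈ p, a * q ∈ p := by
  induction ha using Algebra.adjoin_induction with
  | mem a ha => exact hs a ha
  | algebraMap r =>
    intro q hq
    rw [Algebra.algebraMap_eq_smul_one, smul_mul_assoc, one_mul]
    exact p.smul_mem r hq
  | add a b _ _ ha hb => exact fun q hq => (add_mul a b q).symm ▸ add_mem (ha q hq) (hb q hq)
  | mul a b _ _ ha hb => exact fun q hq => (mul_assoc a b q).symm ▸ ha _ (hb q hq)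

theorem OrthonormalBasis.mem_span_image_of_inner_eq_zero {ι 𝕜 E : Type*} [Fintype ι] [RCLike 𝕜]
    [NormedAddCommGroup E] [InnerProductSpace 𝕜 E] (b : OrthonormalBasis ι 𝕜 E) {s : Set ι}
    {x : E} (h : ∀ i ∉ s, inner 𝕜 (b i) x = 0) : x ∈ Submodule.span 𝕜 (b '' s) := by
  rw [← b.coe_toBasis, b.toBasis.mem_span_image]
  intro i hi
  by_contra his
  exact Finsupp.mem_support_iff.1 hi (by rw [b.coe_toBasis_repr_apply, b.repr_apply_apply, h i his])

theorem exists_orthonormalBasis_mem_or_mem_orthogonal {𝕜 E : Type*} [RCLike 𝕜]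
    [NormedAddCommGroup E] [InnerProductSpace 𝕜 E] [FiniteDimensional 𝕜 E] (U : Submodule 𝕜 E) :
    ∃ b : OrthonormalBasis (Fin (Module.finrank 𝕜 E)) 𝕜 E, ∀ i, b i ∈ U ∨ b i ∈ Uᗮ := by
  have hU : DirectSum.IsInternal fun c : Bool => cond c U Uᗮ :=
    (DirectSum.isInternal_submodule_iff_isCompl _ (i := true) (j := false) (by decide)
      (by ext c; cases c <;> simp)).2 U.isCompl_orthogonal
  refine ⟨hU.subordinateOrthonormalBasis rfl U.orthogonalFamily_self, fun i => ?_⟩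
  have hi := hU.subordinateOrthonormalBasis_subordinate rfl i U.orthogonalFamily_self
  generalize hU.subordinateOrthonormalBasisIndex rfl i U.orthogonalFamily_self = c at hi
  cases c
  exacts [.inr hi, .inl hi]

theorem ExteriorAlgebra.exists_prod_map_ι_eq_neg_one_pow_smul_of_perm {R M κ : Type*}
    [CommRing R] [AddCommGroup M] [Module R M] (v : κ → M) {l l' : List κ} (h : l.Perm l') :
    ∃ k : ℕ, (l.map fun i => ι R (v i)).prod = (-1 : R) ^ k • (l'.map fun i => ι R (v i)).prod := by
  induction h with
  | nil => exact ⟨0, by simp⟩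
  | cons i _ ih =>
    obtain ⟨k, hk⟩ := ih
    exact ⟨k, by simp only [List.map_cons, List.prod_cons, hk, mul_smul_comm]⟩
  | swap i j l =>
    refine ⟨1, ?_⟩
    simp only [List.map_cons, List.prod_cons, ← mul_assoc, pow_one, neg_one_smul, ← neg_mul,
      neg_eq_of_add_eq_zero_right (ι_add_mul_swap (v i) (v j))]
  | trans _ _ ih₁ ih₂ =>
    obtain ⟨k₁, h₁⟩ := ih₁
    obtain ⟨k₂, h₂⟩ := ih₂
    exact ⟨k₁ + k₂, by rw [h₁, h₂, smul_smul, pow_add]⟩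

section wedgeSpan

variable {X : Type*} [AddCommGroup X] [Module ℝ X] {n : ℕ} (v : Fin n → X)

theorem exists_wedgeOf_eq_neg_one_pow_smul_ι_mul {i : Fin n} {s : Finset (Fin n)} (h : i ∈ s) :
    ∃ k : ℕ, wedgeOf v s = (-1 : ℝ) ^ k • (ι ℝ (v i) * wedgeOf v (s.erase i)) := by
  have hperm : (s.sort (· ≤ ·)).Perm (i :: (s.erase i).sort (· ≤ ·)) := by
    rw [← Multiset.coe_eq_coe, ← Multiset.cons_coe, Finset.sort_eq, Finset.sort_eq,
      Finset.erase_val]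
    exact (Multiset.cons_erase h).symm
  simpa [wedgeOf] using ExteriorAlgebra.exists_prod_map_ι_eq_neg_one_pow_smul_of_perm v hperm

theorem wedgeOf_empty : wedgeOf v ∅ = 1 := by
  simp [wedgeOf]

theorem ι_mul_wedgeOf_of_mem {i : Fin n} {s : Finset (Fin n)} (h : i ∈ s) :
    ι ℝ (v i) * wedgeOf v s = 0 := by
  obtain ⟨k, hk⟩ := exists_wedgeOf_eq_neg_one_pow_smul_ι_mul v h
  rw [hk, mul_smul_comm, ← mul_assoc, ι_sq_zero, zero_mul, smul_zero]

theorem ι_mul_wedgeOf_mem_span_singleton (i : Fin n) (s : Finset (Fin n)) :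
    ι ℝ (v i) * wedgeOf v s ∈ ℝ ∙ wedgeOf v (insert i s) := by
  by_cases h : i ∈ s
  · rw [ι_mul_wedgeOf_of_mem v h]
    exact zero_mem _
  · obtain ⟨k, hk⟩ := exists_wedgeOf_eq_neg_one_pow_smul_ι_mul v (s.mem_insert_self i)
    rw [Finset.erase_insert h] at hk
    refine Submodule.mem_span_singleton.2 ⟨(-1) ^ k, ?_⟩
    rw [hk, smul_smul, ← mul_pow, neg_one_mul, neg_neg, one_pow, one_smul]

theorem wedgeOf_mem_extSub {U : Submodule ℝ X} {s : Finset (Fin n)} (hs : ∀ i ∈ s, v i ∈ U) :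
    wedgeOf v s ∈ extSub U := by
  refine Subalgebra.list_prod_mem _ fun a ha => ?_
  obtain ⟨i, hi, rfl⟩ := List.mem_map.1 ha
  exact Algebra.subset_adjoin ⟨v i, hs i ((Finset.mem_sort _).1 hi), rfl⟩

def wedgeSpan (S : Finset (Fin n)) : Submodule ℝ (ExteriorAlgebra ℝ X) :=
  Submodule.span ℝ (wedgeOf v '' {s | s ⊆ S})

theorem wedgeOf_mem_wedgeSpan {s S : Finset (Fin n)} (h : s ⊆ S) : wedgeOf v s ∈ wedgeSpan v S :=
  Submodule.subset_span ⟨s, h, rfl⟩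

theorem ι_mul_mem_wedgeSpan {S : Finset (Fin n)} {x : X} (hx : x ∈ Submodule.span ℝ (v '' S))
    {q : ExteriorAlgebra ℝ X} (hq : q ∈ wedgeSpan v S) : ι ℝ x * q ∈ wedgeSpan v S := by
  induction hx using Submodule.span_induction with
  | mem _ hy =>
    obtain ⟨i, hi, rfl⟩ := hy
    induction hq using Submodule.span_induction with
    | mem _ hq =>
      obtain ⟨s, hs, rfl⟩ := hq
      exact (Submodule.span_singleton_le_iff_mem _ _).2
        (wedgeOf_mem_wedgeSpan v (Finset.insert_subset hi hs))
        (ι_mul_wedgeOf_mem_span_singleton v i s)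
    | zero => simp
    | add _ _ _ _ h₁ h₂ => rw [mul_add]; exact add_mem h₁ h₂
    | smul c _ _ h => rw [mul_smul_comm]; exact Submodule.smul_mem _ c h
  | zero => simp
  | add _ _ _ _ h₁ h₂ => rw [map_add, add_mul]; exact add_mem h₁ h₂
  | smul c _ _ h => rw [map_smul, smul_mul_assoc]; exact Submodule.smul_mem _ c h

theorem wedgeSpan_le_extSub {U : Submodule ℝ X} {S : Finset (Fin n)} (hS : ∀ i ∈ S, v i ∈ U) :
    wedgeSpan v S ≤ Subalgebra.toSubmodule (extSub U) :=
  Submodule.span_le.2 <| by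
    rintro _ ⟨s, hs, rfl⟩
    exact wedgeOf_mem_extSub v fun i hi => hS i (hs hi)

theorem extSub_le_wedgeSpan {U : Submodule ℝ X} {S : Finset (Fin n)}
    (hU : U ≤ Submodule.span ℝ (v '' S)) :
    Subalgebra.toSubmodule (extSub U) ≤ wedgeSpan v S := by
  intro a ha
  have hone : (1 : ExteriorAlgebra ℝ X) ∈ wedgeSpan v S :=
    wedgeOf_empty v ▸ wedgeOf_mem_wedgeSpan v S.empty_subset
  simpa using Algebra.mul_mem_of_mem_adjoin
    (by rintro _ ⟨x, hx, rfl⟩ q hq; exact ι_mul_mem_wedgeSpan v (hU hx) hq) ha 1 hone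

theorem span_range_wedgeOf (hv : Submodule.span ℝ (Set.range v) = ⊤) :
    Submodule.span ℝ (Set.range (wedgeOf v)) = ⊤ := by
  have htop : extSub (⊤ : Submodule ℝ X) = ⊤ := by
    rw [extSub, Submodule.top_coe, Set.image_univ]
    exact CliffordAlgebra.adjoin_range_ι (Q := 0)
  rw [eq_top_iff, ← Algebra.top_toSubmodule, ← htop]
  refine (extSub_le_wedgeSpan v (S := Finset.univ) (by simp [hv])).trans ?_
  exact Submodule.span_mono (Set.image_subset_range _ _)

end wedgeSpan

section wedgeBasis

variable {X : Type*} [NormedAddCommGroup X] [InnerProductSpace ℝ X]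
  {innE : ExteriorAlgebra ℝ X →ₗ[ℝ] ExteriorAlgebra ℝ X →ₗ[ℝ] ℝ}
  {m : ℕ} (b : OrthonormalBasis (Fin m) ℝ X)

theorem linearIndependent_wedgeOf (hinn : InnerOK innE) : LinearIndependent ℝ (wedgeOf b) :=
  LinearMap.BilinForm.linearIndependent_of_iIsOrtho
    (fun s t hst => by simpa [hst] using hinn m b s t) (fun s => by simp [hinn m b s s])

def wedgeBasis (hinn : InnerOK innE) : Module.Basis (Finset (Fin m)) ℝ (ExteriorAlgebra ℝ X) :=
  .mk (linearIndependent_wedgeOf b hinn)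
    (span_range_wedgeOf b (by rw [← b.coe_toBasis, b.toBasis.span_eq])).ge

@[simp]
theorem coe_wedgeBasis (hinn : InnerOK innE) : ⇑(wedgeBasis b hinn) = wedgeOf b :=
  Module.Basis.coe_mk _ _

theorem wedgeBasis_repr_apply (hinn : InnerOK innE) (N : ExteriorAlgebra ℝ X) (t : Finset (Fin m)) :
    (wedgeBasis b hinn).repr N t = innE N (wedgeOf b t) := by
  conv_rhs => rw [← (wedgeBasis b hinn).sum_repr N]
  simp [hinn m b]

theorem innE_wedgeOf_eq_zero_of_mem_wedgeSpan (hinn : InnerOK innE) {S t : Finset (Fin m)}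
    (ht : ¬t ⊆ S) {N : ExteriorAlgebra ℝ X} (hN : N ∈ wedgeSpan b S) :
    innE N (wedgeOf b t) = 0 := by
  refine (Submodule.span_le.2 ?_ hN : N ∈ LinearMap.ker (innE.flip (wedgeOf b t)))
  rintro _ ⟨s, hs, rfl⟩
  simp [hinn m b, show s ≠ t from fun h => ht (h ▸ hs)]

theorem innE_ι_mul_wedgeOf_eq_zero (hinn : InnerOK innE) {S : Finset (Fin m)}
    {N : ExteriorAlgebra ℝ X} (hN : N ∈ wedgeSpan b S) {x : X}
    (hx : x ∈ Submodule.span ℝ (b '' ↑Sᶜ)) (t : Finset (Fin m)) : innE N (ι ℝ x * wedgeOf b t) = 0 := by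
  suffices Submodule.span ℝ (b '' ↑Sᶜ) ≤
      LinearMap.ker (innE N ∘ₗ LinearMap.mulRight ℝ (wedgeOf b t) ∘ₗ ι ℝ) from this hx
  refine Submodule.span_le.2 ?_
  rintro _ ⟨j, hj, rfl⟩
  obtain ⟨c, hc⟩ := Submodule.mem_span_singleton.1 (ι_mul_wedgeOf_mem_span_singleton b j t)
  have hjS : j ∉ S := by simpa using hj
  have hjt : ¬insert j t ⊆ S := fun h => hjS (h (t.mem_insert_self j))
  change innE N (ι ℝ (b j) * wedgeOf b t) = 0
  rw [← hc, map_smul, innE_wedgeOf_eq_zero_of_mem_wedgeSpan b hinn hjt hN, smul_zero]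

end wedgeBasis

section osp

variable {X : Type*} [NormedAddCommGroup X] [InnerProductSpace ℝ X] [FiniteDimensional ℝ X]
  {innE : ExteriorAlgebra ℝ X →ₗ[ℝ] ExteriorAlgebra ℝ X →ₗ[ℝ] ℝ}
  {lcontr : ExteriorAlgebra ℝ X →ₗ[ℝ] ExteriorAlgebra ℝ X →ₗ[ℝ] ExteriorAlgebra ℝ X}

theorem orthogonal_osp (M : ExteriorAlgebra ℝ X) : (osp lcontr M)ᗮ = ospKer lcontr M :=
  Submodule.orthogonal_orthogonal _

theorem mem_extSub_osp (hinn : InnerOK innE) (hc : ContrOK innE lcontr) (M : ExteriorAlgebra ℝ X) :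
    M ∈ extSub (osp lcontr M) := by
  classical
  obtain ⟨b, hb⟩ := exists_orthonormalBasis_mem_or_mem_orthogonal (osp lcontr M)
  let S := Finset.univ.filter fun i => b i ∈ osp lcontr M
  refine wedgeSpan_le_extSub b (S := S) (fun i hi => (Finset.mem_filter.1 hi).2) ?_
  rw [wedgeSpan, ← coe_wedgeBasis b hinn, Module.Basis.mem_span_image]
  intro t ht
  by_contra hts
  obtain ⟨j, hjt, hjS⟩ := Finset.not_subset.1 hts
  have hj : b j ∈ ospKer lcontr M :=
    orthogonal_osp M ▸ (hb j).resolve_left (by simpa [S] using hjS)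
  obtain ⟨k, hk⟩ := exists_wedgeOf_eq_neg_one_pow_smul_ι_mul b hjt
  apply Finsupp.mem_support_iff.1 ht
  rw [wedgeBasis_repr_apply, hk, map_smul, ← hc, show lcontr (ι ℝ (b j)) M = 0 from hj,
    map_zero, LinearMap.zero_apply, smul_zero]

theorem osp_le_of_mem_extSub (hinn : InnerOK innE) (hc : ContrOK innE lcontr)
    {M : ExteriorAlgebra ℝ X} {V : Submodule ℝ X} (hM : M ∈ extSub V) : osp lcontr M ≤ V := by
  classical
  obtain ⟨b, hb⟩ := exists_orthonormalBasis_mem_or_mem_orthogonal V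
  let S := Finset.univ.filter fun i => b i ∈ V
  have hMS : M ∈ wedgeSpan b S := extSub_le_wedgeSpan b (fun x hx =>
    b.mem_span_image_of_inner_eq_zero fun i hi => Submodule.inner_left_of_mem_orthogonal hx
      ((hb i).resolve_left (by simpa [S] using hi))) hM
  suffices Vᗮ ≤ ospKer lcontr M by
    simpa [osp] using Submodule.orthogonal_le this
  intro x hx
  have hxS : x ∈ Submodule.span ℝ (b '' ↑Sᶜ) :=
    b.mem_span_image_of_inner_eq_zero fun i hi =>
      Submodule.inner_right_of_mem_orthogonal (by simpa [S] using hi) hx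
  show lcontr (ι ℝ x) M = 0
  refine (wedgeBasis b hinn).ext_elem_iff.2 fun t => ?_
  rw [wedgeBasis_repr_apply, hc, innE_ι_mul_wedgeOf_eq_zero b hinn hMS hxS, map_zero,
    Finsupp.zero_apply]

end osp

/-- `osp M` is the smallest subspace of `X` whose exterior algebra
contains `M`. -/
theorem osp_smallest {X : Type*} [NormedAddCommGroup X] [InnerProductSpace ℝ X]
    [FiniteDimensional ℝ X]
    (innE : ExteriorAlgebra ℝ X →ₗ[ℝ] ExteriorAlgebra ℝ X →ₗ[ℝ] ℝ)
    (lcontr : ExteriorAlgebra ℝ X →ₗ[ℝ] ExteriorAlgebra ℝ X →ₗ[ℝ] ExteriorAlgebra ℝ X)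
    (hinn : InnerOK innE) (hc : ContrOK innE lcontr)
    (M : ExteriorAlgebra ℝ X) :
    M ∈ extSub (osp lcontr M) ∧
      ∀ V : Submodule ℝ X, M ∈ extSub V → osp lcontr M ≤ V :=
  ⟨mem_extSub_osp hinn hc M, fun _ => osp_le_of_mem_extSub hinn hc⟩

end
end

section
/- Let M, N ∈ ⋀X be nonzero, and set b = max{bot(M), bot(N)} and t = min{top(M), top(N)}. Then: (i) if dim(isp(M) + isp(N)) ≥ t + 2, then isp(M+N) = isp(M) ∩ isp(N) and dim isp(M+N) ≤ b − 2; (ii) if dim(osp(M) ∩ osp(N)) ≤ b − 2, then osp(M+N) = osp(M) + osp(N) and dim osp(M+N) ≥ t + 2. -/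
/-!
Setup: `X` is a finite-dimensional real inner product space, `⋀X` its exterior
algebra.  We hypothesize a bilinear form `innE` on the exterior algebra which makes
the wedges of any orthonormal basis of `X` (over increasing index sets) orthonormal
— this characterizes the inner product of the paper — and a bilinear left
contraction `lcontr` adjoint to the wedge product: `⟨M⌟N, L⟩ = ⟨N, M∧L⟩`.
-/

noncomputable section

open ExteriorAlgebra

/-- Projection onto the grade-`p` homogeneous component of the exterior algebra. -/
def gradeProj {X : Type*} [AddCommGroup X] [Module ℝ X] (p : ℕ) :
    ExteriorAlgebra ℝ X →ₗ[ℝ] ExteriorAlgebra ℝ X :=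
  GradedAlgebra.proj (fun i : ℕ => ⋀[ℝ]^i X) p

/-- The bottom grade: least `p` with `⟨M⟩_p ≠ 0`. -/
noncomputable def bgrade {X : Type*} [AddCommGroup X] [Module ℝ X]
    (M : ExteriorAlgebra ℝ X) : ℕ :=
  sInf {p | gradeProj p M ≠ 0}

/-- The top grade: greatest `p` with `⟨M⟩_p ≠ 0`. -/
noncomputable def tgrade {X : Type*} [AddCommGroup X] [Module ℝ X]
    (M : ExteriorAlgebra ℝ X) : ℕ :=
  sSup {p | gradeProj p M ≠ 0}

/-!
If `v ∧ (M + N) = 0` but `v ∧ M ≠ 0`, then `P = v ∧ M = -(v ∧ N)` is a nonzero multivector with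
`isp M + isp N ≤ isp P` and `top P ≤ t + 1`. Expanding `P` in the exterior basis built from an
orthonormal basis of `X` adapted to `isp P`, every nonzero coefficient sits on a wedge containing
all the adapted basis vectors, so `dim isp P ≤ bot P ≤ top P ≤ t + 1`, against
`dim (isp M + isp N) ≥ t + 2`. Hence `isp (M + N) = isp M ∩ isp N`, and `dim isp ≤ bot` together
with `dim (U + V) + dim (U ∩ V) = dim U + dim V` gives the bound.
Part (ii) is dual, with `Q = v ⌟ M = -(v ⌟ N)`: contraction lowers the bottom grade by at most
one, and a coefficient of `Q` on a wedge containing a vector `u` with `u ⌟ Q = 0` vanishes, so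
`top Q ≤ dim osp Q`.
-/

open Module

section ExteriorAlgebraBasis

variable {R V I : Type*} [CommRing R] [AddCommGroup V] [Module R V] [LinearOrder I]
  (b : Basis I R V)

theorem Module.Basis.exteriorAlgebra_mem_exteriorPower (s : Finset I) :
    b.ExteriorAlgebra s ∈ ⋀[R]^s.card V := by
  rw [basis_apply_ofCard b rfl]
  exact SetLike.coe_mem (exteriorPower.ιMulti_family R _ b _)

theorem Module.Basis.exteriorAlgebra_singleton (i : I) : b.ExteriorAlgebra {i} = ι R (b i) := by
  rw [basis_apply_ofCard b rfl]
  change ιMulti R 1 (b ∘ _) = _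
  simp only [ιMulti_apply, List.ofFn_succ, List.ofFn_zero, List.prod_cons, List.prod_nil,
    mul_one]
  congr 2
  exact congrArg b (Finset.mem_singleton.mp
    ((Set.powersetCard.mem_range_ofFinEmbEquiv_symm_iff_mem
      (Set.powersetCard.ofCard (Finset.card_singleton i)) _).mp ⟨0, rfl⟩))

theorem Module.Basis.ι_mul_exteriorAlgebra_of_mem {i : I} {s : Finset I} (hi : i ∈ s) :
    ι R (b i) * b.ExteriorAlgebra s = 0 := by
  rw [← b.exteriorAlgebra_singleton]
  exact basis_mul_of_not_disjoint b (Set.powersetCard.ofCard (Finset.card_singleton i))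
    (Set.powersetCard.ofCard rfl) (by simpa [Set.powersetCard.val_ofCard] using hi)

theorem Module.Basis.ι_mul_exteriorAlgebra_of_notMem {i : I} {s : Finset I} (hi : i ∉ s) :
    ∃ u : ℤˣ, ι R (b i) * b.ExteriorAlgebra s = u • b.ExteriorAlgebra (insert i s) := by
  have hdisj : Disjoint ({i} : Finset I) s := Finset.disjoint_singleton_left.mpr hi
  have hunion : (Set.powersetCard.disjUnion (s := Set.powersetCard.ofCard (Finset.card_singleton i))
      (t := Set.powersetCard.ofCard rfl) hdisj : Finset I) = insert i s := by
    change Finset.disjUnion {i} s hdisj = insert i s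
    rw [Finset.disjUnion_eq_union, Finset.insert_eq]
  rw [← hunion, ← b.exteriorAlgebra_singleton]
  exact ⟨_, basis_mul_of_disjoint b (Set.powersetCard.ofCard (Finset.card_singleton i))
    (Set.powersetCard.ofCard rfl) hdisj⟩

theorem Module.Basis.exteriorAlgebra_repr_ι_mul_insert {i : I} {s : Finset I} (hi : i ∉ s) :
    ∃ u : ℤˣ, ∀ x, b.ExteriorAlgebra.repr (ι R (b i) * x) (insert i s) =
      u • b.ExteriorAlgebra.repr x s := by
  obtain ⟨u, hu⟩ := b.ι_mul_exteriorAlgebra_of_notMem hi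
  refine ⟨u, fun x => LinearMap.congr_fun (f := Finsupp.lapply (insert i s) ∘ₗ
    b.ExteriorAlgebra.repr.toLinearMap ∘ₗ LinearMap.mulLeft R (ι R (b i)))
    (g := (u : ℤ) • (Finsupp.lapply s ∘ₗ b.ExteriorAlgebra.repr.toLinearMap))
    (b.ExteriorAlgebra.ext fun t => ?_) x⟩
  simp only [LinearMap.comp_apply, LinearMap.mulLeft_apply, LinearMap.smul_apply,
    LinearEquiv.coe_coe, Finsupp.lapply_apply, Basis.repr_self]
  -- only `t = s` contributes to the coefficient at `insert i s`
  by_cases hts : t = s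
  · subst hts
    rw [hu, Units.smul_def, map_zsmul]
    simp
  by_cases hit : i ∈ t
  · simp [b.ι_mul_exteriorAlgebra_of_mem hit, hts]
  obtain ⟨v, hv⟩ := b.ι_mul_exteriorAlgebra_of_notMem hit
  have hins : insert i t ≠ insert i s := fun h => hts (by
    simpa [Finset.erase_insert hit, Finset.erase_insert hi] using congrArg (·.erase i) h)
  simp [hv, hts, hins]

theorem Module.Basis.exteriorAlgebra_repr_eq_zero_of_ι_mul_eq_zero {i : I} {s : Finset I}
    (hi : i ∉ s) {x : _root_.ExteriorAlgebra R V} (hx : ι R (b i) * x = 0) :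
    b.ExteriorAlgebra.repr x s = 0 := by
  obtain ⟨u, hu⟩ := b.exteriorAlgebra_repr_ι_mul_insert hi
  rw [← smul_eq_zero_iff_eq u, ← hu, hx]
  simp

end ExteriorAlgebraBasis

section Grades

variable {X : Type*} [AddCommGroup X] [Module ℝ X]

theorem gradeProj_eq_zero_iff {p : ℕ} {x : ExteriorAlgebra ℝ X} :
    gradeProj p x = 0 ↔ DirectSum.decompose (fun i : ℕ => ⋀[ℝ]^i X) x p = 0 := by
  rw [gradeProj, GradedAlgebra.proj_apply, ZeroMemClass.coe_eq_zero]

theorem finite_setOf_gradeProj_ne_zero (x : ExteriorAlgebra ℝ X) :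
    {p | gradeProj p x ≠ 0}.Finite := by
  simpa only [ne_eq, gradeProj_eq_zero_iff] using DFinsupp.finite_support _

theorem nonempty_setOf_gradeProj_ne_zero {x : ExteriorAlgebra ℝ X} (hx : x ≠ 0) :
    {p | gradeProj p x ≠ 0}.Nonempty := by
  by_contra h
  refine hx ((DirectSum.decompose (fun i : ℕ => ⋀[ℝ]^i X)).injective ?_)
  ext p : 1
  simpa using gradeProj_eq_zero_iff.mp (not_not.mp fun hp => h ⟨p, hp⟩)

theorem gradeProj_bgrade_ne_zero {x : ExteriorAlgebra ℝ X} (hx : x ≠ 0) :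
    gradeProj (bgrade x) x ≠ 0 :=
  Nat.sInf_mem (nonempty_setOf_gradeProj_ne_zero hx)

theorem gradeProj_tgrade_ne_zero {x : ExteriorAlgebra ℝ X} (hx : x ≠ 0) :
    gradeProj (tgrade x) x ≠ 0 :=
  Nat.sSup_mem (nonempty_setOf_gradeProj_ne_zero hx) (finite_setOf_gradeProj_ne_zero x).bddAbove

theorem gradeProj_eq_zero_of_lt_bgrade {x : ExteriorAlgebra ℝ X} {p : ℕ} (h : p < bgrade x) :
    gradeProj p x = 0 :=
  not_not.mp fun hp => (Nat.sInf_le hp).not_gt h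

theorem le_tgrade_of_gradeProj_ne_zero {x : ExteriorAlgebra ℝ X} {p : ℕ}
    (h : gradeProj p x ≠ 0) : p ≤ tgrade x :=
  le_csSup (finite_setOf_gradeProj_ne_zero x).bddAbove h

theorem bgrade_le_tgrade (x : ExteriorAlgebra ℝ X) : bgrade x ≤ tgrade x := by
  rcases eq_or_ne x 0 with rfl | hx
  · simp [bgrade]
  · exact le_tgrade_of_gradeProj_ne_zero (gradeProj_bgrade_ne_zero hx)

@[simp]
theorem bgrade_neg (x : ExteriorAlgebra ℝ X) : bgrade (-x) = bgrade x := by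
  simp [bgrade]

@[simp]
theorem tgrade_neg (x : ExteriorAlgebra ℝ X) : tgrade (-x) = tgrade x := by
  simp [tgrade]

theorem ι_mem_exteriorPower_one (v : X) : ι ℝ v ∈ ⋀[ℝ]^1 X := by
  simpa only [pow_one] using LinearMap.mem_range_self _ v

theorem gradeProj_succ_ι_mul (p : ℕ) (v : X) (x : ExteriorAlgebra ℝ X) :
    gradeProj (p + 1) (ι ℝ v * x) = ι ℝ v * gradeProj p x :=
  DirectSum.coe_decompose_mul_of_left_mem_of_le (fun i : ℕ => ⋀[ℝ]^i X)
    (ι_mem_exteriorPower_one v) (by omega)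

theorem tgrade_ι_mul_le (v : X) (x : ExteriorAlgebra ℝ X) :
    tgrade (ι ℝ v * x) ≤ tgrade x + 1 := by
  refine csSup_le' fun q hq => ?_
  cases q with
  | zero => omega
  | succ p =>
    have hp : gradeProj p x ≠ 0 := fun h => hq (by rw [gradeProj_succ_ι_mul, h, mul_zero])
    exact Nat.succ_le_succ (le_tgrade_of_gradeProj_ne_zero hp)

end Grades

section InnerSpace

variable {X : Type*} [AddCommGroup X] [Module ℝ X]

@[simp]
theorem mem_isp {x : ExteriorAlgebra ℝ X} {v : X} : v ∈ isp x ↔ ι ℝ v * x = 0 := Iff.rfl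

@[simp]
theorem isp_neg (x : ExteriorAlgebra ℝ X) : isp (-x) = isp x := by
  ext v
  simp

theorem isp_le_isp_ι_mul (v : X) (x : ExteriorAlgebra ℝ X) : isp x ≤ isp (ι ℝ v * x) := by
  intro u hu
  rw [mem_isp] at hu ⊢
  rw [← mul_assoc, eq_neg_of_add_eq_zero_left (ι_add_mul_swap u v), neg_mul, mul_assoc, hu,
    mul_zero, neg_zero]

end InnerSpace

section GradedBasis

variable {X I : Type*} [AddCommGroup X] [Module ℝ X] [LinearOrder I] (b : Basis I ℝ X)

theorem Module.Basis.gradeProj_exteriorAlgebra (p : ℕ) (s : Finset I) :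
    gradeProj p (b.ExteriorAlgebra s) = if s.card = p then b.ExteriorAlgebra s else 0 := by
  rw [gradeProj, GradedAlgebra.proj_apply]
  split_ifs with h
  · subst h
    exact DirectSum.decompose_of_mem_same _ (b.exteriorAlgebra_mem_exteriorPower s)
  · exact DirectSum.decompose_of_mem_ne _ (b.exteriorAlgebra_mem_exteriorPower s) h

theorem Module.Basis.exteriorAlgebra_repr_gradeProj (p : ℕ) (x : _root_.ExteriorAlgebra ℝ X)
    (t : Finset I) : b.ExteriorAlgebra.repr (gradeProj p x) t =
      if t.card = p then b.ExteriorAlgebra.repr x t else 0 := by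
  refine LinearMap.congr_fun (f := Finsupp.lapply t ∘ₗ b.ExteriorAlgebra.repr.toLinearMap ∘ₗ
    gradeProj p) (g := if t.card = p then Finsupp.lapply t ∘ₗ b.ExteriorAlgebra.repr.toLinearMap
    else 0) (b.ExteriorAlgebra.ext fun s => ?_) x |>.trans (by split_ifs <;> rfl)
  simp only [LinearMap.comp_apply, b.gradeProj_exteriorAlgebra, LinearEquiv.coe_coe,
    Finsupp.lapply_apply]
  split_ifs with hs ht ht <;> simp [Finsupp.single_apply]
  · rintro rfl; exact ht hs
  · rintro rfl; exact hs ht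

theorem Module.Basis.exists_card_eq_exteriorAlgebra_repr_ne_zero {p : ℕ}
    {x : _root_.ExteriorAlgebra ℝ X} (h : gradeProj p x ≠ 0) :
    ∃ t : Finset I, t.card = p ∧ b.ExteriorAlgebra.repr x t ≠ 0 := by
  by_contra! hx
  refine h (b.ExteriorAlgebra.ext_elem fun t => ?_)
  rw [b.exteriorAlgebra_repr_gradeProj]
  split_ifs with ht
  · simp [hx t ht]
  · simp

theorem Module.Basis.card_le_bgrade {x : _root_.ExteriorAlgebra ℝ X} (hx : x ≠ 0)
    {J : Finset I} (hJ : ∀ i ∈ J, b i ∈ isp x) : J.card ≤ bgrade x := by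
  obtain ⟨t, ht, hxt⟩ := b.exists_card_eq_exteriorAlgebra_repr_ne_zero (gradeProj_bgrade_ne_zero hx)
  rw [← ht]
  refine Finset.card_le_card fun i hi => ?_
  by_contra hit
  exact hxt (b.exteriorAlgebra_repr_eq_zero_of_ι_mul_eq_zero hit (hJ i hi))

end GradedBasis

theorem wedgeOf_eq_exteriorAlgebra {X : Type*} [AddCommGroup X] [Module ℝ X] {n : ℕ}
    (b : Basis (Fin n) ℝ X) (s : Finset (Fin n)) : wedgeOf ⇑b s = b.ExteriorAlgebra s := by
  rw [basis_apply_ofCard b rfl]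
  change _ = ιMulti ℝ s.card (b ∘ s.orderEmbOfFin rfl)
  rw [ιMulti_apply, wedgeOf]
  congr 1
  refine List.ext_getElem (by simp) fun i _ _ => ?_
  simp [Finset.orderEmbOfFin_apply]

section InnerProduct

variable {X : Type*} [NormedAddCommGroup X] [InnerProductSpace ℝ X]
  {innE : ExteriorAlgebra ℝ X →ₗ[ℝ] ExteriorAlgebra ℝ X →ₗ[ℝ] ℝ}
  {lcontr : ExteriorAlgebra ℝ X →ₗ[ℝ] ExteriorAlgebra ℝ X →ₗ[ℝ] ExteriorAlgebra ℝ X}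

@[simp]
theorem mem_ospKer {x : ExteriorAlgebra ℝ X} {v : X} :
    v ∈ ospKer lcontr x ↔ lcontr (ι ℝ v) x = 0 := Iff.rfl

@[simp]
theorem ospKer_neg (x : ExteriorAlgebra ℝ X) : ospKer lcontr (-x) = ospKer lcontr x := by
  ext v
  simp

theorem InnerOK.innE_exteriorAlgebra (hinn : InnerOK innE) {m : ℕ}
    (w : OrthonormalBasis (Fin m) ℝ X) (s t : Finset (Fin m)) :
    innE (w.toBasis.ExteriorAlgebra s) (w.toBasis.ExteriorAlgebra t) = if s = t then 1 else 0 := by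
  simpa only [← wedgeOf_eq_exteriorAlgebra, OrthonormalBasis.coe_toBasis] using hinn m w s t

theorem InnerOK.innE_eq_exteriorAlgebra_repr (hinn : InnerOK innE) {m : ℕ}
    (w : OrthonormalBasis (Fin m) ℝ X) (x : ExteriorAlgebra ℝ X) (t : Finset (Fin m)) :
    innE x (w.toBasis.ExteriorAlgebra t) = w.toBasis.ExteriorAlgebra.repr x t := by
  refine LinearMap.congr_fun (f := innE.flip (w.toBasis.ExteriorAlgebra t))
    (g := Finsupp.lapply t ∘ₗ w.toBasis.ExteriorAlgebra.repr.toLinearMap)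
    (w.toBasis.ExteriorAlgebra.ext fun s => ?_) x
  simp [hinn.innE_exteriorAlgebra, Finsupp.single_apply]

theorem ContrOK.tgrade_add_card_le (hc : ContrOK innE lcontr) (hinn : InnerOK innE) {m : ℕ}
    (w : OrthonormalBasis (Fin m) ℝ X) {x : ExteriorAlgebra ℝ X} (hx : x ≠ 0)
    {J : Finset (Fin m)} (hJ : ∀ i ∈ J, w i ∈ ospKer lcontr x) : tgrade x + J.card ≤ m := by
  obtain ⟨t, ht, hxt⟩ :=
    w.toBasis.exists_card_eq_exteriorAlgebra_repr_ne_zero (gradeProj_tgrade_ne_zero hx)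
  have hdisj : Disjoint t J := by
    refine Finset.disjoint_left.mpr fun i hit hiJ => hxt ?_
    obtain ⟨u, hu⟩ := w.toBasis.ι_mul_exteriorAlgebra_of_notMem (Finset.notMem_erase i t)
    rw [Finset.insert_erase hit, OrthonormalBasis.coe_toBasis] at hu
    have h0 : innE x (ι ℝ (w i) * w.toBasis.ExteriorAlgebra (t.erase i)) = 0 := by
      rw [← hc, hJ i hiJ, map_zero, LinearMap.zero_apply]
    rw [hu, Units.smul_def, map_zsmul, hinn.innE_eq_exteriorAlgebra_repr] at h0
    exact (smul_eq_zero.mp h0).resolve_left (Units.ne_zero u)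
  simpa [← ht, Finset.card_union_of_disjoint hdisj] using Finset.card_le_univ (t ∪ J)

variable [FiniteDimensional ℝ X]

theorem InnerOK.eq_zero_of_forall_innE (hinn : InnerOK innE) {x : ExteriorAlgebra ℝ X}
    (h : ∀ y, innE x y = 0) : x = 0 := by
  refine (stdOrthonormalBasis ℝ X).toBasis.ExteriorAlgebra.ext_elem fun t => ?_
  rw [← hinn.innE_eq_exteriorAlgebra_repr, h, map_zero, Finsupp.zero_apply]

theorem InnerOK.innE_gradeProj_left (hinn : InnerOK innE) (p : ℕ) (x y : ExteriorAlgebra ℝ X) :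
    innE (gradeProj p x) y = innE x (gradeProj p y) := by
  let w := stdOrthonormalBasis ℝ X
  refine LinearMap.congr_fun₂ (f := innE ∘ₗ gradeProj p) (g := innE.compl₂ (gradeProj p))
    (LinearMap.ext_basis w.toBasis.ExteriorAlgebra w.toBasis.ExteriorAlgebra fun s t => ?_) x y
  simp only [LinearMap.comp_apply, LinearMap.compl₂_apply, Basis.gradeProj_exteriorAlgebra]
  by_cases hst : s = t
  · subst hst
    split_ifs <;> simp
  · split_ifs <;> simp [hinn.innE_exteriorAlgebra, hst]

theorem ContrOK.lcontr_ι_lcontr_ι (hc : ContrOK innE lcontr) (hinn : InnerOK innE)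
    (u v : X) (x : ExteriorAlgebra ℝ X) :
    lcontr (ι ℝ u) (lcontr (ι ℝ v) x) = -lcontr (ι ℝ v) (lcontr (ι ℝ u) x) := by
  refine sub_eq_zero.mp (hinn.eq_zero_of_forall_innE fun y => ?_)
  rw [sub_neg_eq_add, map_add, LinearMap.add_apply, hc, hc, hc, hc, ← mul_assoc, ← mul_assoc,
    ← map_add, ← add_mul, ι_add_mul_swap, zero_mul, map_zero]

theorem ContrOK.gradeProj_lcontr_ι_eq_zero (hc : ContrOK innE lcontr) (hinn : InnerOK innE)
    {p : ℕ} {x : ExteriorAlgebra ℝ X} (h : p + 1 < bgrade x) (v : X) :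
    gradeProj p (lcontr (ι ℝ v) x) = 0 := by
  refine hinn.eq_zero_of_forall_innE fun y => ?_
  -- `⟨⟨v ⌟ x⟩_p, y⟩ = ⟨x, v ∧ ⟨y⟩_p⟩ = ⟨⟨x⟩_(p+1), v ∧ y⟩`
  rw [hinn.innE_gradeProj_left, hc, ← gradeProj_succ_ι_mul, ← hinn.innE_gradeProj_left,
    gradeProj_eq_zero_of_lt_bgrade h, map_zero, LinearMap.zero_apply]

theorem ContrOK.bgrade_le_bgrade_lcontr_ι_add_one (hc : ContrOK innE lcontr)
    (hinn : InnerOK innE) {v : X} {x : ExteriorAlgebra ℝ X} (h : lcontr (ι ℝ v) x ≠ 0) :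
    bgrade x ≤ bgrade (lcontr (ι ℝ v) x) + 1 := by
  by_contra! hlt
  exact gradeProj_bgrade_ne_zero h (hc.gradeProj_lcontr_ι_eq_zero hinn hlt v)

theorem ContrOK.ospKer_le_ospKer_lcontr_ι (hc : ContrOK innE lcontr)
    (hinn : InnerOK innE) (v : X) (x : ExteriorAlgebra ℝ X) :
    ospKer lcontr x ≤ ospKer lcontr (lcontr (ι ℝ v) x) := by
  intro u hu
  rw [mem_ospKer] at hu ⊢
  rw [hc.lcontr_ι_lcontr_ι hinn, hu, map_zero, neg_zero]

end InnerProduct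

section RankBounds

variable {X : Type*} [NormedAddCommGroup X] [InnerProductSpace ℝ X] [FiniteDimensional ℝ X]
  {innE : ExteriorAlgebra ℝ X →ₗ[ℝ] ExteriorAlgebra ℝ X →ₗ[ℝ] ℝ}
  {lcontr : ExteriorAlgebra ℝ X →ₗ[ℝ] ExteriorAlgebra ℝ X →ₗ[ℝ] ExteriorAlgebra ℝ X}

theorem Submodule.exists_orthonormalBasis_card_mem (S : Submodule ℝ X) :
    ∃ (m : ℕ) (w : OrthonormalBasis (Fin m) ℝ X) (J : Finset (Fin m)),
      J.card = finrank ℝ S ∧ ∀ i ∈ J, w i ∈ S := by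
  let e := stdOrthonormalBasis ℝ S
  have he : Orthonormal ℝ fun j => (e j : X) := e.orthonormal.comp_linearIsometry S.subtypeₗᵢ
  have he_inj : Function.Injective fun j => (e j : X) := he.linearIndependent.injective
  obtain ⟨u, b, hsub, hb⟩ :=
    ((orthonormal_subtype_range he_inj).mpr he).exists_orthonormalBasis_extension
  let g : Fin (finrank ℝ S) → Fin u.card := fun j => u.equivFin ⟨e j, hsub ⟨j, rfl⟩⟩
  have hg : Function.Injective g := fun j k hjk =>
    he_inj (by simpa using congrArg Subtype.val (u.equivFin.injective hjk))
  refine ⟨u.card, b.reindex u.equivFin, Finset.univ.image g, ?_, ?_⟩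
  · rw [Finset.card_image_of_injective _ hg, Finset.card_univ, Fintype.card_fin]
  · intro i hi
    obtain ⟨j, -, rfl⟩ := Finset.mem_image.mp hi
    simp [g, hb]

theorem finrank_isp_le_bgrade {x : ExteriorAlgebra ℝ X} (hx : x ≠ 0) :
    finrank ℝ (isp x) ≤ bgrade x := by
  obtain ⟨m, w, J, hJ, hJx⟩ := (isp x).exists_orthonormalBasis_card_mem
  rw [← hJ]
  exact w.toBasis.card_le_bgrade hx fun i hi => by simpa using hJx i hi

theorem ContrOK.tgrade_le_finrank_osp (hc : ContrOK innE lcontr) (hinn : InnerOK innE)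
    {x : ExteriorAlgebra ℝ X} (hx : x ≠ 0) : tgrade x ≤ finrank ℝ (osp lcontr x) := by
  obtain ⟨m, w, J, hJ, hJx⟩ := (ospKer lcontr x).exists_orthonormalBasis_card_mem
  have hm : finrank ℝ X = m := by simpa using finrank_eq_card_basis w.toBasis
  have := hc.tgrade_add_card_le hinn w hx hJx
  have := (ospKer lcontr x).finrank_add_finrank_orthogonal
  rw [osp]
  omega

end RankBounds

section Balanced

variable {X : Type*} [NormedAddCommGroup X] [InnerProductSpace ℝ X] [FiniteDimensional ℝ X]
  {innE : ExteriorAlgebra ℝ X →ₗ[ℝ] ExteriorAlgebra ℝ X →ₗ[ℝ] ℝ}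
  {lcontr : ExteriorAlgebra ℝ X →ₗ[ℝ] ExteriorAlgebra ℝ X →ₗ[ℝ] ExteriorAlgebra ℝ X}

theorem isp_add_eq_inf {x y : ExteriorAlgebra ℝ X}
    (h : min (tgrade x) (tgrade y) + 2 ≤ finrank ℝ ↥(isp x ⊔ isp y)) :
    isp (x + y) = isp x ⊓ isp y := by
  refine le_antisymm (fun v hv => ?_) fun v hv => by simp_all [mul_add]
  have hxy : ι ℝ v * x = -(ι ℝ v * y) := by rwa [mem_isp, mul_add, add_eq_zero_iff_eq_neg] at hv
  suffices hx : ι ℝ v * x = 0 by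
    refine ⟨hx, ?_⟩
    rwa [hx, eq_comm, neg_eq_zero] at hxy
  by_contra hP
  have hsup : isp x ⊔ isp y ≤ isp (ι ℝ v * x) :=
    sup_le (isp_le_isp_ι_mul v x) (by rw [hxy, isp_neg]; exact isp_le_isp_ι_mul v y)
  have htx := tgrade_ι_mul_le v x
  have hty := tgrade_ι_mul_le v y
  rw [← tgrade_neg, ← hxy] at hty
  have := (Submodule.finrank_mono hsup).trans (finrank_isp_le_bgrade hP)
  have := bgrade_le_tgrade (ι ℝ v * x)
  omega

theorem ContrOK.ospKer_add_eq_inf (hc : ContrOK innE lcontr) (hinn : InnerOK innE)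
    {x y : ExteriorAlgebra ℝ X}
    (h : finrank ℝ ↥(osp lcontr x ⊓ osp lcontr y) + 2 ≤ max (bgrade x) (bgrade y)) :
    ospKer lcontr (x + y) = ospKer lcontr x ⊓ ospKer lcontr y := by
  refine le_antisymm (fun v hv => ?_) fun v hv => by simp_all
  have hxy : lcontr (ι ℝ v) x = -lcontr (ι ℝ v) y := by
    rwa [mem_ospKer, map_add, add_eq_zero_iff_eq_neg] at hv
  suffices hx : lcontr (ι ℝ v) x = 0 by
    refine ⟨hx, ?_⟩
    change lcontr (ι ℝ v) y = 0
    rwa [← neg_eq_zero, ← hxy]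
  by_contra hQ
  have hinf : osp lcontr (lcontr (ι ℝ v) x) ≤ osp lcontr x ⊓ osp lcontr y :=
    le_inf (Submodule.orthogonal_le (hc.ospKer_le_ospKer_lcontr_ι hinn v x))
      (Submodule.orthogonal_le (by
        rw [hxy, ospKer_neg]
        exact hc.ospKer_le_ospKer_lcontr_ι hinn v y))
  have hy : lcontr (ι ℝ v) y ≠ 0 := fun h => hQ (by rw [hxy, h, neg_zero])
  have hbx := hc.bgrade_le_bgrade_lcontr_ι_add_one hinn hQ
  have hby := hc.bgrade_le_bgrade_lcontr_ι_add_one hinn hy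
  have hbQ : bgrade (lcontr (ι ℝ v) x) = bgrade (lcontr (ι ℝ v) y) := by rw [hxy, bgrade_neg]
  have := (hc.tgrade_le_finrank_osp hinn hQ).trans (Submodule.finrank_mono hinf)
  have := bgrade_le_tgrade (lcontr (ι ℝ v) x)
  omega

theorem ContrOK.osp_add_eq_sup (hc : ContrOK innE lcontr) (hinn : InnerOK innE)
    {x y : ExteriorAlgebra ℝ X}
    (h : finrank ℝ ↥(osp lcontr x ⊓ osp lcontr y) + 2 ≤ max (bgrade x) (bgrade y)) :
    osp lcontr (x + y) = osp lcontr x ⊔ osp lcontr y := by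
  rw [osp, hc.ospKer_add_eq_inf hinn h, ← Submodule.orthogonal_orthogonal (ospKer lcontr x),
    ← Submodule.orthogonal_orthogonal (ospKer lcontr y), Submodule.inf_orthogonal,
    Submodule.orthogonal_orthogonal]
  rfl

end Balanced

/-- Sums of sufficiently distinct multivectors are inner or
outer balanced. -/
theorem sum_balanced {X : Type*} [NormedAddCommGroup X]
    [InnerProductSpace ℝ X] [FiniteDimensional ℝ X]
    (innE : ExteriorAlgebra ℝ X →ₗ[ℝ] ExteriorAlgebra ℝ X →ₗ[ℝ] ℝ)
    (lcontr : ExteriorAlgebra ℝ X →ₗ[ℝ] ExteriorAlgebra ℝ X →ₗ[ℝ] ExteriorAlgebra ℝ X)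
    (hinn : InnerOK innE) (hc : ContrOK innE lcontr)
    (M N : ExteriorAlgebra ℝ X) (hM0 : M ≠ 0) (hN0 : N ≠ 0) :
    let b := max (bgrade M) (bgrade N)
    let t := min (tgrade M) (tgrade N)
    -- (i)
    ((t + 2 ≤ Module.finrank ℝ ↥(isp M ⊔ isp N) →
        isp (M + N) = isp M ⊓ isp N ∧
        Module.finrank ℝ ↥(isp (M + N)) + 2 ≤ b) ∧
    -- (ii)
    (Module.finrank ℝ ↥(osp lcontr M ⊓ osp lcontr N) + 2 ≤ b →
        osp lcontr (M + N) = osp lcontr M ⊔ osp lcontr N ∧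
        t + 2 ≤ Module.finrank ℝ ↥(osp lcontr (M + N)))) := by
  intro b t
  have hbtM := bgrade_le_tgrade M
  have hbtN := bgrade_le_tgrade N
  refine ⟨fun h => ?_, fun h => ?_⟩
  · have hisp := isp_add_eq_inf h
    have hdim := Submodule.finrank_sup_add_finrank_inf_eq (isp M) (isp N)
    have hM := finrank_isp_le_bgrade hM0
    have hN := finrank_isp_le_bgrade hN0
    refine ⟨hisp, ?_⟩
    rw [hisp]
    omega
  · have hosp := hc.osp_add_eq_sup hinn h
    have hdim := Submodule.finrank_sup_add_finrank_inf_eq (osp lcontr M) (osp lcontr N)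
    have hM := hc.tgrade_le_finrank_osp hinn hM0
    have hN := hc.tgrade_le_finrank_osp hinn hN0
    refine ⟨hosp, ?_⟩
    rw [hosp]
    omega

end
end

section
/- A nonzero multivector M ∈ ⋀X is a blade if and only if isp(M) = osp(M). -/
/-!
Setup: `X` is a finite-dimensional real inner product space, `⋀X` its exterior
algebra.  We hypothesize a bilinear form `innE` on the exterior algebra which makes
the wedges of any orthonormal basis of `X` (over increasing index sets) orthonormal
— this characterizes the inner product of the paper — and a bilinear left
contraction `lcontr` adjoint to the wedge product: `⟨M⌟N, L⟩ = ⟨N, M∧L⟩`.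
-/

noncomputable section

open ExteriorAlgebra

/-- A blade (simple multivector): a scalar multiple of an exterior product
`v₁ ∧ ⋯ ∧ v_p` of vectors of `X` (`p ≥ 0`; scalars and `0` are blades). -/
def IsBlade {X : Type*} [AddCommGroup X] [Module ℝ X]
    (M : ExteriorAlgebra ℝ X) : Prop :=
  ∃ (c : ℝ) (p : ℕ) (f : Fin p → X), M = c • (List.ofFn fun i => ι ℝ (f i)).prod


/-!
For an orthonormal basis `e` of `X`, the wedges `e_S` form a basis of `⋀X`, orthonormal for
`innE`. Wedging with `e i` sends `e_S` to `0` if `i ∈ S` and to `±e_{S ∪ {i}}` otherwise, and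
contracting with `e i` is its adjoint. Hence `e i ∈ isp M` forces the coordinates of `M` on sets
avoiding `i` to vanish, and `e i ⌟ M = 0` forces those on sets containing `i` to vanish.

If `isp M = osp M`, take `e` adapted to `isp M`, say `isp M = span (e '' S)`: every `e i` with
`i ∉ S` lies in `(osp M)ᗮ = ospKer M`, so only the coordinate of `M` at `S` survives and `M` is
a multiple of `e_S`. Conversely, a nonzero blade `v₁ ∧ ⋯ ∧ v_p` is a nonzero multiple (a
determinant) of `e_S` for `e` adapted to `span {v₁, …, v_p}`, and for `c ≠ 0` the same
coordinate computation gives `isp (c • e_S) = span (e '' S) = osp (c • e_S)`.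
-/

open Module

lemma AlternatingMap.apply_eq_basis_det_smul {R M N ι : Type*} [CommRing R] [AddCommGroup M]
    [Module R M] [AddCommGroup N] [Module R N] [Fintype ι] [DecidableEq ι]
    (A : M [⋀^ι]→ₗ[R] N) (e : Basis ι R M) (v : ι → M) : A v = e.det v • A e := by
  suffices A = (LinearMap.toSpanSingleton R N (A e)).compAlternatingMap e.det from
    congr($this v)
  refine e.ext_alternating fun i hi => ?_
  let σ : Equiv.Perm ι := Equiv.ofBijective i (Finite.injective_iff_bijective.1 hi)
  change A (e ∘ σ) = (LinearMap.toSpanSingleton R N (A e)).compAlternatingMap e.det (e ∘ σ)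
  simp [AlternatingMap.map_perm, Basis.det_self]

namespace ExteriorAlgebra

variable {R M I : Type*} [CommRing R] [AddCommGroup M] [Module R M] [LinearOrder I]
  (b : Basis I R M)

lemma basis_apply_eq_ιMulti {s : Finset I} {p : ℕ} (h : s.card = p) :
    b.ExteriorAlgebra s = ιMulti R p (b ∘ s.orderEmbOfFin h) := by
  rw [basis_apply_ofCard b h]
  rfl

lemma basis_singleton (i : I) : b.ExteriorAlgebra {i} = ι R (b i) := by
  rw [basis_apply_eq_ιMulti b (Finset.card_singleton i), ιMulti_apply]
  simp

lemma ι_mul_basis_of_mem {i : I} {s : Finset I} (hi : i ∈ s) :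
    ι R (b i) * b.ExteriorAlgebra s = 0 := by
  rw [basis_apply_eq_ιMulti b rfl, ιMulti_apply]
  obtain ⟨k, rfl⟩ : i ∈ Set.range (s.orderEmbOfFin rfl) := by
    rwa [Finset.range_orderEmbOfFin]
  exact ι_mul_prod_list (R := R) (b ∘ s.orderEmbOfFin rfl) k

lemma ι_mul_basis_of_notMem {i : I} {s : Finset I} (hi : i ∉ s) :
    ∃ ε : ℤˣ, ι R (b i) * b.ExteriorAlgebra s = ε • b.ExteriorAlgebra (insert i s) := by
  let s₁ := Set.powersetCard.ofCard (Finset.card_singleton i)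
  let t₁ := Set.powersetCard.ofCard (s := s) rfl
  have hdisj : Disjoint s₁.val t₁.val := Finset.disjoint_singleton_left.mpr hi
  refine ⟨Equiv.Perm.sign (Set.powersetCard.permOfDisjoint hdisj), ?_⟩
  have hunion : (Set.powersetCard.disjUnion hdisj).val = insert i s := by
    simp [s₁, t₁, Set.powersetCard.val_ofCard]
  rw [← basis_singleton, ← hunion]
  exact basis_mul_of_disjoint b s₁ t₁ hdisj

lemma basis_repr_ι_mul_of_notMem {i : I} {t : Finset I} (hi : i ∉ t)
    (x : ExteriorAlgebra R M) : b.ExteriorAlgebra.repr (ι R (b i) * x) t = 0 := by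
  suffices (b.ExteriorAlgebra.coord t).comp (LinearMap.mulLeft R (ι R (b i))) = 0 from
    LinearMap.congr_fun this x
  refine b.ExteriorAlgebra.ext fun r => ?_
  by_cases hir : i ∈ r
  · simp [ι_mul_basis_of_mem b hir]
  · obtain ⟨ε, hε⟩ := ι_mul_basis_of_notMem b hir
    have : insert i r ≠ t := fun h => hi (h ▸ Finset.mem_insert_self i r)
    simp [hε, this]

lemma basis_repr_ι_mul_of_mem {i : I} {t : Finset I} (hi : i ∈ t) :
    ∃ ε : ℤˣ, ∀ x : ExteriorAlgebra R M,
      b.ExteriorAlgebra.repr (ι R (b i) * x) t = ε • b.ExteriorAlgebra.repr x (t.erase i) := by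
  obtain ⟨ε, hε⟩ := ι_mul_basis_of_notMem b (Finset.notMem_erase i t)
  rw [Finset.insert_erase hi] at hε
  refine ⟨ε, fun x => ?_⟩
  suffices (b.ExteriorAlgebra.coord t).comp (LinearMap.mulLeft R (ι R (b i))) =
      ε • b.ExteriorAlgebra.coord (t.erase i) from LinearMap.congr_fun this x
  refine b.ExteriorAlgebra.ext fun r => ?_
  by_cases hr : r = t.erase i
  · subst hr
    simp [hε]
  by_cases hir : i ∈ r
  · simp [ι_mul_basis_of_mem b hir, Ne.symm hr]
  · obtain ⟨ε', hε'⟩ := ι_mul_basis_of_notMem b hir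
    have : insert i r ≠ t := fun h => hr (by rw [← h, Finset.erase_insert hir])
    simp [hε', this, Ne.symm hr]

lemma basis_repr_ι_mul_basis {i : I} {s : Finset I} (hi : i ∉ s) :
    ∃ ε : ℤˣ, ∀ v : M,
      b.ExteriorAlgebra.repr (ι R v * b.ExteriorAlgebra s) (insert i s) = ε • b.repr v i := by
  obtain ⟨ε, hε⟩ := basis_repr_ι_mul_of_mem b (Finset.mem_insert_self i s)
  refine ⟨ε, fun v => ?_⟩
  suffices (b.ExteriorAlgebra.coord (insert i s)).comp
      ((LinearMap.mulRight R (b.ExteriorAlgebra s)).comp (ι R)) = ε • b.coord i from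
    LinearMap.congr_fun this v
  refine b.ext fun j => ?_
  by_cases hji : j = i
  · subst hji
    simp [hε, Finset.erase_insert hi]
  by_cases hjs : j ∈ s
  · simp [ι_mul_basis_of_mem b hjs, hji]
  · have : j ∉ insert i s := by simp [hji, hjs]
    simp [basis_repr_ι_mul_of_notMem b this, hji]

lemma exists_ιMulti_eq_smul_of_mem_span {p : ℕ} {f g : Fin p → M} (hg : LinearIndependent R g)
    (hf : ∀ k, f k ∈ Submodule.span R (Set.range g)) :
    ∃ d : R, ιMulti R p f = d • ιMulti R p g := by
  let W := Submodule.span R (Set.range g)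
  let A := (ιMulti R p).compLinearMap W.subtype
  refine ⟨(Basis.span hg).det fun k => ⟨f k, hf k⟩, ?_⟩
  have hbg : ∀ k, ((Basis.span hg k : W) : M) = g k := fun k => by rw [Basis.span_apply]
  have := A.apply_eq_basis_det_smul (Basis.span hg) fun k => ⟨f k, hf k⟩
  simpa [A, hbg] using this

end ExteriorAlgebra

section OrthonormalBasis

variable {𝕜 E : Type*} [RCLike 𝕜] [NormedAddCommGroup E] [InnerProductSpace 𝕜 E]

lemma OrthonormalBasis.isOrtho_span_image_compl {ι : Type*} [Fintype ι]
    (e : OrthonormalBasis ι 𝕜 E) (s : Set ι) :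
    Submodule.span 𝕜 (e '' s) ⟂ Submodule.span 𝕜 (e '' sᶜ) := by
  rw [Submodule.isOrtho_span]
  rintro _ ⟨i, hi, rfl⟩ _ ⟨j, hj, rfl⟩
  exact e.orthonormal.inner_eq_zero fun h => hj (h ▸ hi)

lemma OrthonormalBasis.orthogonal_span_image_compl {ι : Type*} [Fintype ι]
    (e : OrthonormalBasis ι 𝕜 E) (s : Set ι) :
    (Submodule.span 𝕜 (e '' sᶜ))ᗮ = Submodule.span 𝕜 (e '' s) := by
  refine le_antisymm (fun v hv => ?_) (e.isOrtho_span_image_compl s).le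
  rw [← e.coe_toBasis, e.toBasis.mem_span_image]
  intro i hi
  by_contra his
  refine (Finsupp.mem_support_iff.mp hi) ?_
  rw [e.coe_toBasis_repr_apply, e.repr_apply_apply]
  exact Submodule.inner_right_of_mem_orthogonal
    (Submodule.subset_span (Set.mem_image_of_mem e his)) hv

lemma exists_orthonormalBasis_span_image_eq [FiniteDimensional 𝕜 E] (V : Submodule 𝕜 E) :
    ∃ (e : OrthonormalBasis (Fin (finrank 𝕜 E)) 𝕜 E) (S : Finset (Fin (finrank 𝕜 E))),
      S.card = finrank 𝕜 V ∧ Submodule.span 𝕜 (e '' S) = V := by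
  let bV := stdOrthonormalBasis 𝕜 V
  let emb := Fin.castLEEmb V.finrank_le
  let v : Fin (finrank 𝕜 E) → E := Function.extend emb (fun k => (bV k : E)) 0
  have hv : ∀ k, v (emb k) = bV k := emb.injective.extend_apply _ _
  have hON : Orthonormal 𝕜 ((Set.range emb).domRestrict v) := by
    have := (bV.orthonormal.comp_linearIsometry V.subtypeₗᵢ).comp _
      (Equiv.ofInjective emb emb.injective).symm.injective
    convert this using 1
    ext ⟨_, k, rfl⟩
    change v (emb k) = _
    simp [hv]
  obtain ⟨e, he⟩ := hON.exists_orthonormalBasis_extension_of_card_eq (by simp)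
  refine ⟨e, Finset.univ.map emb, by simp, ?_⟩
  have himage : e '' (Finset.univ.map emb : Finset _) = V.subtype '' Set.range bV := by
    ext x
    simp [he _ (Set.mem_range_self _), hv]
  rw [himage, Submodule.span_image, ← bV.coe_toBasis, bV.toBasis.span_eq,
    Submodule.map_subtype_top]

end OrthonormalBasis

section Blades

variable {X : Type*} [AddCommGroup X] [Module ℝ X]

lemma wedgeOf_eq_basis {n : ℕ} (b : Basis (Fin n) ℝ X) (s : Finset (Fin n)) :
    wedgeOf b s = b.ExteriorAlgebra s := by
  rw [ExteriorAlgebra.basis_apply_eq_ιMulti b rfl, ιMulti_apply, wedgeOf,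
    ← Finset.listMap_orderEmbOfFin_finRange s rfl, List.map_map, List.ofFn_eq_map]
  rfl

lemma isBlade_smul_basis {I : Type*} [LinearOrder I] (b : Basis I ℝ X) (c : ℝ) (s : Finset I) :
    IsBlade (c • b.ExteriorAlgebra s) :=
  ⟨c, s.card, b ∘ s.orderEmbOfFin rfl, by
    rw [ExteriorAlgebra.basis_apply_eq_ιMulti b rfl, ιMulti_apply]⟩

lemma isp_smul {c : ℝ} (hc : c ≠ 0) (x : ExteriorAlgebra ℝ X) : isp (c • x) = isp x := by
  ext v
  change ι ℝ v * c • x = 0 ↔ ι ℝ v * x = 0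
  rw [mul_smul_comm, smul_eq_zero_iff_right hc]

lemma isp_basis {I : Type*} [LinearOrder I] (b : Basis I ℝ X) (S : Finset I) :
    isp (b.ExteriorAlgebra S) = Submodule.span ℝ (b '' S) := by
  refine le_antisymm (fun v hv => ?_) (Submodule.span_le.mpr ?_)
  · rw [b.mem_span_image]
    intro i hi
    by_contra hiS
    obtain ⟨ε, hε⟩ := ExteriorAlgebra.basis_repr_ι_mul_basis b hiS
    have h0 := hε v
    rw [show ι ℝ v * b.ExteriorAlgebra S = 0 from hv, map_zero, Finsupp.zero_apply, eq_comm,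
      smul_eq_zero_iff_eq] at h0
    exact Finsupp.mem_support_iff.mp hi h0
  · rintro _ ⟨i, hi, rfl⟩
    exact ExteriorAlgebra.ι_mul_basis_of_mem b hi

lemma basis_repr_eq_zero_of_mem_isp {I : Type*} [LinearOrder I] (b : Basis I ℝ X)
    {x : ExteriorAlgebra ℝ X} {i : I} (hi : b i ∈ isp x) {s : Finset I} (his : i ∉ s) :
    b.ExteriorAlgebra.repr x s = 0 := by
  obtain ⟨ε, hε⟩ := ExteriorAlgebra.basis_repr_ι_mul_of_mem b (Finset.mem_insert_self i s)
  have h0 := hε x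
  rwa [show ι ℝ (b i) * x = 0 from hi, map_zero, Finsupp.zero_apply, Finset.erase_insert his,
    eq_comm, smul_eq_zero_iff_eq] at h0

end Blades

section Contraction

variable {X : Type*} [NormedAddCommGroup X] [InnerProductSpace ℝ X]
  {innE : ExteriorAlgebra ℝ X →ₗ[ℝ] ExteriorAlgebra ℝ X →ₗ[ℝ] ℝ}
  {lcontr : ExteriorAlgebra ℝ X →ₗ[ℝ] ExteriorAlgebra ℝ X →ₗ[ℝ] ExteriorAlgebra ℝ X}
  {n : ℕ}

lemma InnerOK.apply_basis_basis (hinn : InnerOK innE) (e : OrthonormalBasis (Fin n) ℝ X)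
    (s t : Finset (Fin n)) :
    innE (e.toBasis.ExteriorAlgebra s) (e.toBasis.ExteriorAlgebra t) =
      if s = t then 1 else 0 := by
  rw [← wedgeOf_eq_basis, ← wedgeOf_eq_basis, e.coe_toBasis]
  exact hinn n e s t

lemma InnerOK.apply_basis_right (hinn : InnerOK innE) (e : OrthonormalBasis (Fin n) ℝ X)
    (x : ExteriorAlgebra ℝ X) (t : Finset (Fin n)) :
    innE x (e.toBasis.ExteriorAlgebra t) = e.toBasis.ExteriorAlgebra.repr x t := by
  suffices innE.flip (e.toBasis.ExteriorAlgebra t) = e.toBasis.ExteriorAlgebra.coord t from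
    LinearMap.congr_fun this x
  refine e.toBasis.ExteriorAlgebra.ext fun s => ?_
  simp [hinn.apply_basis_basis, Finsupp.single_apply]

lemma InnerOK.apply_basis_left (hinn : InnerOK innE) (e : OrthonormalBasis (Fin n) ℝ X)
    (x : ExteriorAlgebra ℝ X) (t : Finset (Fin n)) :
    innE (e.toBasis.ExteriorAlgebra t) x = e.toBasis.ExteriorAlgebra.repr x t := by
  suffices innE (e.toBasis.ExteriorAlgebra t) = e.toBasis.ExteriorAlgebra.coord t from
    LinearMap.congr_fun this x
  refine e.toBasis.ExteriorAlgebra.ext fun s => ?_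
  simp [hinn.apply_basis_basis, Finsupp.single_apply, eq_comm]

lemma ContrOK.lcontr_eq_zero_iff (hc : ContrOK innE lcontr) (hinn : InnerOK innE)
    (e : OrthonormalBasis (Fin n) ℝ X) {a x : ExteriorAlgebra ℝ X} :
    lcontr a x = 0 ↔ ∀ t, innE x (a * e.toBasis.ExteriorAlgebra t) = 0 := by
  refine ⟨fun h t => by rw [← hc, h, map_zero, LinearMap.zero_apply], fun h => ?_⟩
  refine e.toBasis.ExteriorAlgebra.ext_elem fun t => ?_
  rw [← hinn.apply_basis_right, hc, h, map_zero, Finsupp.zero_apply]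

lemma basis_repr_eq_zero_of_mem_ospKer (hc : ContrOK innE lcontr) (hinn : InnerOK innE)
    (e : OrthonormalBasis (Fin n) ℝ X) {x : ExteriorAlgebra ℝ X} {i : Fin n}
    (hi : e i ∈ ospKer lcontr x) {s : Finset (Fin n)} (his : i ∈ s) :
    e.toBasis.ExteriorAlgebra.repr x s = 0 := by
  have h0 := (hc.lcontr_eq_zero_iff hinn e).mp hi (s.erase i)
  obtain ⟨ε, hε⟩ := ExteriorAlgebra.ι_mul_basis_of_notMem e.toBasis (s.notMem_erase i)
  rw [Finset.insert_erase his, e.coe_toBasis] at hε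
  rwa [hε, Units.smul_def, map_zsmul, hinn.apply_basis_right, ← Units.smul_def,
    smul_eq_zero_iff_eq] at h0

lemma ospKer_smul {c : ℝ} (hc : c ≠ 0) (x : ExteriorAlgebra ℝ X) :
    ospKer lcontr (c • x) = ospKer lcontr x := by
  ext v
  change lcontr (ι ℝ v) (c • x) = 0 ↔ lcontr (ι ℝ v) x = 0
  rw [map_smul, smul_eq_zero_iff_right hc]

lemma ospKer_basis (hc : ContrOK innE lcontr) (hinn : InnerOK innE)
    (e : OrthonormalBasis (Fin n) ℝ X) (S : Finset (Fin n)) :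
    ospKer lcontr (e.toBasis.ExteriorAlgebra S) = Submodule.span ℝ (e '' (↑S)ᶜ) := by
  refine le_antisymm (fun v hv => ?_) (Submodule.span_le.mpr ?_)
  · rw [← e.coe_toBasis, e.toBasis.mem_span_image]
    intro i hi
    by_contra hiS
    have h0 := (hc.lcontr_eq_zero_iff hinn e).mp hv (S.erase i)
    obtain ⟨ε, hε⟩ := ExteriorAlgebra.basis_repr_ι_mul_basis e.toBasis (S.notMem_erase i)
    rw [Finset.insert_erase (not_not.mp hiS)] at hε
    rw [hinn.apply_basis_left, hε, smul_eq_zero_iff_eq] at h0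
    exact Finsupp.mem_support_iff.mp hi h0
  · rintro _ ⟨j, hj, rfl⟩
    refine (hc.lcontr_eq_zero_iff hinn e).mpr fun t => ?_
    rw [hinn.apply_basis_left, ← e.coe_toBasis]
    exact ExteriorAlgebra.basis_repr_ι_mul_of_notMem _ hj _

lemma osp_smul_basis [FiniteDimensional ℝ X] (hc : ContrOK innE lcontr) (hinn : InnerOK innE)
    (e : OrthonormalBasis (Fin n) ℝ X) (S : Finset (Fin n)) {c : ℝ} (hc0 : c ≠ 0) :
    osp lcontr (c • e.toBasis.ExteriorAlgebra S) = Submodule.span ℝ (e '' S) := by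
  rw [osp, ospKer_smul hc0, ospKer_basis hc hinn, e.orthogonal_span_image_compl]

end Contraction

section Characterization

variable {X : Type*} [NormedAddCommGroup X] [InnerProductSpace ℝ X] [FiniteDimensional ℝ X]
  {innE : ExteriorAlgebra ℝ X →ₗ[ℝ] ExteriorAlgebra ℝ X →ₗ[ℝ] ℝ}
  {lcontr : ExteriorAlgebra ℝ X →ₗ[ℝ] ExteriorAlgebra ℝ X →ₗ[ℝ] ExteriorAlgebra ℝ X}

lemma exists_ιMulti_eq_smul_basis {p : ℕ} {f : Fin p → X} (hf : LinearIndependent ℝ f) :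
    ∃ (n : ℕ) (e : OrthonormalBasis (Fin n) ℝ X) (S : Finset (Fin n)) (d : ℝ),
      ιMulti ℝ p f = d • e.toBasis.ExteriorAlgebra S := by
  obtain ⟨e, S, hcard, hS⟩ :=
    exists_orthonormalBasis_span_image_eq (Submodule.span ℝ (Set.range f))
  rw [finrank_span_eq_card hf, Fintype.card_fin] at hcard
  have hrange : Set.range (e ∘ S.orderEmbOfFin hcard) = e '' S := by
    rw [Set.range_comp, Finset.range_orderEmbOfFin]
  obtain ⟨d, hd⟩ := ExteriorAlgebra.exists_ιMulti_eq_smul_of_mem_span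
    (e.orthonormal.linearIndependent.comp _ (S.orderEmbOfFin hcard).injective)
    (fun k => hrange ▸ hS ▸ Submodule.subset_span (Set.mem_range_self k) : ∀ k, f k ∈ _)
  refine ⟨_, e, S, d, ?_⟩
  rw [hd, ExteriorAlgebra.basis_apply_eq_ιMulti _ hcard, e.coe_toBasis]

lemma exists_eq_smul_basis_of_isp_eq_osp (hc : ContrOK innE lcontr) (hinn : InnerOK innE)
    {M : ExteriorAlgebra ℝ X} (h : isp M = osp lcontr M) :
    ∃ (n : ℕ) (e : OrthonormalBasis (Fin n) ℝ X) (S : Finset (Fin n)) (c : ℝ),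
      M = c • e.toBasis.ExteriorAlgebra S := by
  obtain ⟨e, S, -, hS⟩ := exists_orthonormalBasis_span_image_eq (isp M)
  have hin : ∀ i ∈ S, e i ∈ isp M := fun i hi =>
    hS ▸ Submodule.subset_span (Set.mem_image_of_mem e hi)
  have hout : ∀ i ∉ S, e i ∈ ospKer lcontr M := fun i hi => by
    have := (e.isOrtho_span_image_compl S).ge (Submodule.subset_span (Set.mem_image_of_mem e hi))
    rwa [hS, h, osp, Submodule.orthogonal_orthogonal] at this
  have hvanish : ∀ s ≠ S, e.toBasis.ExteriorAlgebra.repr M s = 0 := by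
    intro s hs
    by_cases hSs : S ⊆ s
    · obtain ⟨i, his, hiS⟩ :=
        Finset.exists_of_ssubset (Finset.ssubset_iff_subset_ne.mpr ⟨hSs, hs.symm⟩)
      exact basis_repr_eq_zero_of_mem_ospKer hc hinn e (hout i hiS) his
    · obtain ⟨i, hiS, his⟩ := Finset.not_subset.mp hSs
      exact basis_repr_eq_zero_of_mem_isp e.toBasis (e.coe_toBasis ▸ hin i hiS) his
  refine ⟨_, e, S, e.toBasis.ExteriorAlgebra.repr M S, ?_⟩
  refine e.toBasis.ExteriorAlgebra.ext_elem fun s => ?_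
  by_cases hs : s = S
  · simp [hs]
  · simp [hvanish s hs, Ne.symm hs]

end Characterization

/-- A nonzero multivector is a blade iff `isp M = osp M`. -/
theorem blade_iff_isp_eq_osp {X : Type*} [NormedAddCommGroup X]
    [InnerProductSpace ℝ X] [FiniteDimensional ℝ X]
    (innE : ExteriorAlgebra ℝ X →ₗ[ℝ] ExteriorAlgebra ℝ X →ₗ[ℝ] ℝ)
    (lcontr : ExteriorAlgebra ℝ X →ₗ[ℝ] ExteriorAlgebra ℝ X →ₗ[ℝ] ExteriorAlgebra ℝ X)
    (hinn : InnerOK innE) (hc : ContrOK innE lcontr)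
    (M : ExteriorAlgebra ℝ X) (hM0 : M ≠ 0) :
    IsBlade M ↔ isp M = osp lcontr M := by
  constructor
  · rintro ⟨c, p, f, rfl⟩
    rw [← ιMulti_apply] at hM0 ⊢
    have hf : LinearIndependent ℝ f := by
      by_contra hdep
      exact hM0 (by rw [AlternatingMap.map_linearDependent _ f hdep, smul_zero])
    obtain ⟨n, e, S, d, hd⟩ := exists_ιMulti_eq_smul_basis hf
    rw [hd, smul_smul] at hM0 ⊢
    have hcd : c * d ≠ 0 := fun h => hM0 (by rw [h, zero_smul])
    rw [isp_smul hcd, isp_basis, osp_smul_basis hc hinn e S hcd, e.coe_toBasis]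
  · intro h
    obtain ⟨n, e, S, c, rfl⟩ := exists_eq_smul_basis_of_isp_eq_osp hc hinn h
    exact isBlade_smul_basis _ c S

end
end
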